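/- Let P(x) = ∏_{i=1}^n (x − a_i) be a monic polynomial of degree n ≥ 2 with a_1, …, a_n positive real numbers, let a_j = min{a_1, …, a_n}, and let s_1, …, s_n be the indices of the local expansion P(x) = Σ_{k=1}^n s_k (x − a_j)^k. Then for every k with 1 ≤ k ≤ n−1, |s_k| ≤ e_{n−k}((a_i)_{i≠j}), the (n−k)-th elementary symmetric polynomial of the n−1 zeros a_i with i ≠ j. -/

import Mathlib

/-!
Substituting `x = y + a_j` turns `P` into `y · ∏_{i ≠ j} (y + (a_j - a_i))`, so by Vieta
`s_k = e_{n-k}((a_j - a_i)_{i ≠ j})`. Since `a_j` is the smallest and positive zero,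
`|a_j - a_i| = a_i - a_j ≤ a_i`, and the triangle inequality bounds `|e_{n-k}|` termwise.
-/

open Polynomial Finset

theorem Finset.abs_sum_powersetCard_prod_le {ι R : Type*} [CommRing R] [LinearOrder R]
    [IsStrictOrderedRing R] (S : Finset ι) (m : ℕ) {r b : ι → R} (hrb : ∀ i ∈ S, |r i| ≤ b i) :
    |∑ t ∈ S.powersetCard m, ∏ i ∈ t, r i| ≤ ∑ t ∈ S.powersetCard m, ∏ i ∈ t, b i := by
  refine (abs_sum_le_sum_abs _ _).trans (sum_le_sum fun t ht => ?_)
  have htS : t ⊆ S := (mem_powersetCard.mp ht).1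
  rw [abs_prod]
  exact prod_le_prod (fun i _ => abs_nonneg _) fun i hi => hrb i (htS hi)

theorem Polynomial.coeff_X_mul_prod_X_add_C {ι R : Type*} [CommRing R] (S : Finset ι) (r : ι → R)
    {k : ℕ} (hk₁ : 1 ≤ k) (hk₂ : k ≤ #S + 1) :
    (X * ∏ i ∈ S, (X + C (r i))).coeff k = ∑ t ∈ S.powersetCard (#S + 1 - k), ∏ i ∈ t, r i := by
  obtain ⟨k, rfl⟩ := Nat.exists_eq_add_of_le' hk₁
  rw [coeff_X_mul, prod_X_add_C_coeff S r (by omega)]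
  congr 2
  omega

theorem Polynomial.coeff_eq_of_forall_eval_eq_sum {R : Type*} [CommRing R] [IsDomain R]
    [Infinite R] {p : R[X]} {S : Finset ℕ} {s : ℕ → R} (h : ∀ y, p.eval y = ∑ m ∈ S, s m * y ^ m)
    {k : ℕ} (hk : k ∈ S) : p.coeff k = s k := by
  have hp : p = ∑ m ∈ S, C (s m) * X ^ m :=
    Polynomial.funext fun y => by simp [h, eval_finsetSum]
  simp [hp, hk]

theorem stmt_7_general (n : ℕ) (a : Fin n → ℝ) (hpos : ∀ i, 0 < a i)
    (j : Fin n) (hj : ∀ i, a j ≤ a i) (s : ℕ → ℝ)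
    (hs : ∀ x : ℝ, ∏ i, (x - a i) = ∑ k ∈ Finset.Icc 1 n, s k * (x - a j) ^ k) :
    ∀ k, 1 ≤ k → k ≤ n - 1 →
      |s k| ≤ ∑ t ∈ (Finset.univ.erase j).powersetCard (n - k), ∏ i ∈ t, a i := by
  intro k hk₁ hk₂
  have hcard : #(univ.erase j) + 1 = n := by
    rw [card_erase_of_mem (mem_univ j), card_univ, Fintype.card_fin]
    omega
  have hshift : ∀ y, (X * ∏ i ∈ univ.erase j, (X + C (a j - a i))).eval y
      = ∑ m ∈ Icc 1 n, s m * y ^ m := by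
    intro y
    have hy := hs (y + a j)
    rw [← mul_prod_erase univ _ (mem_univ j)] at hy
    simpa [eval_prod, add_sub_assoc] using hy
  have hsk : s k = ∑ t ∈ (univ.erase j).powersetCard (n - k), ∏ i ∈ t, (a j - a i) := by
    rw [← coeff_eq_of_forall_eval_eq_sum hshift (mem_Icc.mpr ⟨hk₁, by omega⟩),
      coeff_X_mul_prod_X_add_C _ _ hk₁ (by omega), hcard]
  rw [hsk]
  refine abs_sum_powersetCard_prod_le _ _ fun i _ => ?_
  rw [abs_sub_comm, abs_of_nonneg (sub_nonneg.mpr (hj i))]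
  linarith [hpos j]

/-- If `P(x) = ∏ (x - aᵢ)` with all `aᵢ > 0`, `a_j` the minimum, and
`P(x) = Σ_{k=1}^n s_k (x - a_j)^k` is the local expansion at `a_j`, then for
`1 ≤ k ≤ n-1` we have `|s_k| ≤ e_{n-k}((aᵢ)_{i≠j})`, the `(n-k)`-th elementary
symmetric polynomial of the remaining zeros. -/
theorem stmt_7 (n : ℕ) (hn : 2 ≤ n) (a : Fin n → ℝ) (hpos : ∀ i, 0 < a i)
    (j : Fin n) (hj : ∀ i, a j ≤ a i) (s : ℕ → ℝ)
    (hs : ∀ x : ℝ, ∏ i, (x - a i) = ∑ k ∈ Finset.Icc 1 n, s k * (x - a j) ^ k) :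
    ∀ k, 1 ≤ k → k ≤ n - 1 →
      |s k| ≤ ∑ t ∈ (Finset.univ.erase j).powersetCard (n - k), ∏ i ∈ t, a i :=
  stmt_7_general n a hpos j hj s hs
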